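/- For all nonnegative integers m and n, the sum over k from 0 to floor(n/4) of [m+k choose k]_{q^4} * [m+1 choose n-4k]_q * q^{C(n-4k, 2)} equals the sum over k from 0 to floor(n/2) of (-1)^k * [m+k choose k]_{q^2} * [m+n-2k choose n-2k]_q, as an identity of polynomials in q. -/

import Mathlib

open Finset

/-- The Gaussian (q-)binomial coefficient `[a choose b]_q`, defined as
`∏_{i=1}^{b} (1 - q^(a-i+1)) / (1 - q^i)` (which is `0` when `b > a`). -/
noncomputable def qbinom (q : RatFunc ℚ) (a b : ℕ) : RatFunc ℚ :=
  ∏ i ∈ Finset.range b, (1 - q ^ ((a : ℤ) - i)) / (1 - q ^ ((i : ℤ) + 1))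

/-!
Both sides are coefficients of `tⁿ` in products of generating functions. For `Q` not a root of
unity, `G_m(t) = ∑ₖ [m+k choose k]_Q tᵏ` equals `∏_{i ≤ m} (1 - Qⁱ t)⁻¹`, since the `q`-Pascal
rule gives `(1 - Q^(m+1) t) G_{m+1}(t) = G_m(t)`; and the `q`-binomial theorem gives
`∑ⱼ [a choose j]_q q^C(j,2) tʲ = ∏_{i < a} (1 + qⁱ t)`. Hence the left side is the coefficient in
`∏_{i ≤ m} (1 + qⁱ t) / (1 - q⁴ⁱ t⁴)` and the right side the one in
`∏_{i ≤ m} 1 / ((1 + q²ⁱ t²)(1 - qⁱ t))`, and these agree since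
`1 - q⁴ⁱ t⁴ = (1 + q²ⁱ t²)(1 - qⁱ t)(1 + qⁱ t)`.
-/

open PowerSeries

theorem pow_ne_one_of_not_isOfFinOrder {M : Type*} [Monoid M] {x : M} (hx : ¬IsOfFinOrder x)
    {n : ℕ} (hn : n ≠ 0) : x ^ n ≠ 1 :=
  fun h => hx (isOfFinOrder_iff_pow_eq_one.2 ⟨n, Nat.pos_of_ne_zero hn, h⟩)

theorem RatFunc.not_isOfFinOrder_X {K : Type*} [Field K] :
    ¬IsOfFinOrder (RatFunc.X : RatFunc K) := by
  rw [isOfFinOrder_iff_pow_eq_one]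
  rintro ⟨n, hn, h⟩
  rw [← RatFunc.algebraMap_X, ← map_pow, ← map_one (algebraMap (Polynomial K) (RatFunc K))] at h
  have := congrArg Polynomial.natDegree (RatFunc.algebraMap_injective K h)
  simp only [Polynomial.natDegree_X_pow, Polynomial.natDegree_one] at this
  omega

namespace PowerSeries

theorem rescale_C {R : Type*} [CommSemiring R] (a c : R) : rescale a (C c) = C c := by
  ext n
  rw [coeff_rescale, coeff_C]
  split_ifs with h <;> simp [h]

theorem coeff_expand_mul_eq_sum_range {R : Type*} [CommRing R] {d : ℕ} (hd : d ≠ 0)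
    (f g : R⟦X⟧) (n : ℕ) :
    coeff n (expand d hd f * g) = ∑ k ∈ range (n / d + 1), coeff k f * coeff (n - d * k) g := by
  rw [coeff_mul, Nat.sum_antidiagonal_eq_sum_range_succ_mk]
  simp only [coeff_expand, ite_mul, zero_mul]
  rw [← sum_filter]
  refine sum_nbij' (· / d) (d * ·) ?_ ?_ ?_ ?_ ?_
  · intro i hi
    have := Nat.div_le_div_right (c := d) (Nat.lt_succ_iff.1 (mem_range.1 (mem_filter.1 hi).1))
    simpa only [mem_range] using Nat.lt_succ_of_le this
  · intro k hk
    have hdk : d * k ≤ n :=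
      (Nat.mul_le_mul_left d (Nat.lt_succ_iff.1 (mem_range.1 hk))).trans (Nat.mul_div_le n d)
    exact mem_filter.2 ⟨mem_range.2 (Nat.lt_succ_of_le hdk), dvd_mul_right d k⟩
  · intro i hi
    exact Nat.mul_div_cancel' (mem_filter.1 hi).2
  · intro k _
    exact Nat.mul_div_cancel_left k (Nat.pos_of_ne_zero hd)
  · intro i hi
    rw [Nat.mul_div_cancel' (mem_filter.1 hi).2]

end PowerSeries

@[simp]
theorem qbinom_zero_right (q : RatFunc ℚ) (a : ℕ) : qbinom q a 0 = 1 := by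
  simp [qbinom]

theorem qbinom_eq_zero_of_lt (q : RatFunc ℚ) {a b : ℕ} (h : a < b) : qbinom q a b = 0 :=
  prod_eq_zero (mem_range.2 h) (by simp)

theorem qbinom_succ_right (q : RatFunc ℚ) (a b : ℕ) :
    qbinom q a (b + 1) = qbinom q a b * ((1 - q ^ ((a : ℤ) - b)) / (1 - q ^ ((b : ℤ) + 1))) :=
  prod_range_succ _ _

theorem qbinom_succ_succ_eq_mul (q : RatFunc ℚ) (a b : ℕ) :
    qbinom q (a + 1) (b + 1) =
      qbinom q a b * ((1 - q ^ ((a : ℤ) + 1)) / (1 - q ^ ((b : ℤ) + 1))) := by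
  rw [qbinom, qbinom, prod_div_distrib, prod_div_distrib, prod_range_succ',
    prod_range_succ (fun i : ℕ => 1 - q ^ ((i : ℤ) + 1)), mul_div_mul_comm]
  push_cast
  simp only [add_sub_add_right_eq_sub, sub_zero]

theorem qbinom_succ_succ {q : RatFunc ℚ} (hq : q ≠ 0) {b : ℕ} (hb : q ^ (b + 1) ≠ 1) (a : ℕ) :
    qbinom q (a + 1) (b + 1) = qbinom q a (b + 1) + q ^ ((a : ℤ) - b) * qbinom q a b := by
  have hden : 1 - q ^ ((b : ℤ) + 1) ≠ 0 := by
    rw [sub_ne_zero, ne_comm]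
    exact_mod_cast hb
  have hpow : q ^ ((a : ℤ) - b) * q ^ ((b : ℤ) + 1) = q ^ ((a : ℤ) + 1) := by
    rw [← zpow_add₀ hq]
    ring_nf
  rw [qbinom_succ_succ_eq_mul, qbinom_succ_right]
  field_simp
  linear_combination qbinom q a b * hpow

theorem qbinom_add_succ_succ {q : RatFunc ℚ} (hq : q ≠ 0) {b : ℕ} (hb : q ^ (b + 1) ≠ 1) (a : ℕ) :
    qbinom q (a + b + 1) (b + 1) = qbinom q (a + b) (b + 1) + q ^ a * qbinom q (a + b) b := by
  rw [qbinom_succ_succ hq hb, show ((a + b : ℕ) : ℤ) - b = a by push_cast; ring, zpow_natCast]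

noncomputable def qbinomSeries (q : RatFunc ℚ) (m : ℕ) : (RatFunc ℚ)⟦X⟧ :=
  mk fun k => qbinom q (m + k) k

section Series

variable {q : RatFunc ℚ} (hq0 : q ≠ 0) (hq : ¬IsOfFinOrder q)
include hq0 hq

theorem coeff_succ_one_sub_mul_qbinomSeries (m k : ℕ) :
    coeff (k + 1) ((1 - C (q ^ m) * X) * qbinomSeries q m) = qbinom q (m + k) (k + 1) := by
  rw [sub_mul, one_mul, mul_assoc, map_sub, coeff_C_mul, coeff_succ_X_mul, qbinomSeries,
    coeff_mk, coeff_mk, ← add_assoc,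
    qbinom_add_succ_succ hq0 (pow_ne_one_of_not_isOfFinOrder hq k.succ_ne_zero)]
  ring

theorem one_sub_mul_qbinomSeries_zero : (1 - C (q ^ 0) * X) * qbinomSeries q 0 = 1 := by
  ext (_ | k)
  · simp [qbinomSeries]
  · rw [coeff_succ_one_sub_mul_qbinomSeries hq0 hq, coeff_one, qbinom_eq_zero_of_lt _ (by omega)]
    simp

theorem one_sub_mul_qbinomSeries_succ (m : ℕ) :
    (1 - C (q ^ (m + 1)) * X) * qbinomSeries q (m + 1) = qbinomSeries q m := by
  ext (_ | k)
  · simp [qbinomSeries]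
  · rw [coeff_succ_one_sub_mul_qbinomSeries hq0 hq, qbinomSeries, coeff_mk]
    ring_nf

theorem prod_one_sub_mul_qbinomSeries (m : ℕ) :
    (∏ i ∈ range (m + 1), (1 - C (q ^ i) * X)) * qbinomSeries q m = 1 := by
  induction m with
  | zero => rw [prod_range_one, one_sub_mul_qbinomSeries_zero hq0 hq]
  | succ m ih => rw [prod_range_succ, mul_assoc, one_sub_mul_qbinomSeries_succ hq0 hq, ih]

theorem mk_qbinom_mul_pow_choose_eq_prod (a : ℕ) :
    mk (fun j => qbinom q a j * q ^ j.choose 2) = ∏ i ∈ range a, (1 + C (q ^ i) * X) := by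
  induction a with
  | zero =>
    ext (_ | j)
    · simp
    · simp [qbinom_eq_zero_of_lt, coeff_one]
  | succ a ih =>
    rw [prod_range_succ, ← ih, mul_comm]
    ext (_ | j)
    · simp
    · have hpow : q ^ ((a : ℤ) - j) * q ^ j = q ^ a := by
        rw [zpow_sub₀ hq0, zpow_natCast, zpow_natCast, div_mul_cancel₀ _ (pow_ne_zero _ hq0)]
      rw [add_mul, one_mul, mul_assoc, map_add, coeff_C_mul, coeff_succ_X_mul, coeff_mk, coeff_mk,
        coeff_mk, qbinom_succ_succ hq0 (pow_ne_one_of_not_isOfFinOrder hq j.succ_ne_zero),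
        Nat.choose_succ_succ' j 1, Nat.choose_one_right, pow_add]
      linear_combination qbinom q a j * q ^ j.choose 2 * hpow

end Series

theorem expand_qbinomSeries_mul_eq (m : ℕ) :
    expand 4 four_ne_zero (qbinomSeries (RatFunc.X ^ 4) m) *
        mk (fun j => qbinom RatFunc.X (m + 1) j * RatFunc.X ^ j.choose 2) =
      expand 2 two_ne_zero (rescale (-1) (qbinomSeries (RatFunc.X ^ 2) m)) *
        qbinomSeries RatFunc.X m := by
  set x : RatFunc ℚ := RatFunc.X
  have hx0 : x ≠ 0 := RatFunc.X_ne_zero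
  have hx : ¬IsOfFinOrder x := RatFunc.not_isOfFinOrder_X
  have hxd (d : ℕ) (hd : d ≠ 0) : ¬IsOfFinOrder (x ^ d) := fun h => hx (h.of_pow hd)
  have h4 := congrArg (expand 4 four_ne_zero)
    (prod_one_sub_mul_qbinomSeries (pow_ne_zero 4 hx0) (hxd 4 four_ne_zero) m)
  have h2 := congrArg (expand 2 two_ne_zero ∘ rescale (-1))
    (prod_one_sub_mul_qbinomSeries (pow_ne_zero 2 hx0) (hxd 2 two_ne_zero) m)
  have h1 := prod_one_sub_mul_qbinomSeries hx0 hx m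
  simp only [Function.comp_apply, map_mul, map_prod, map_sub, map_one, expand_C, expand_X,
    rescale_C, rescale_X] at h4 h2
  rw [mk_qbinom_mul_pow_choose_eq_prod hx0 hx]
  set A4 := ∏ i ∈ range (m + 1), (1 - C ((x ^ 4) ^ i) * X ^ 4)
  set A2 := ∏ i ∈ range (m + 1), (1 - C ((x ^ 2) ^ i) * (C (-1) * X ^ 2))
  set A1 := ∏ i ∈ range (m + 1), (1 - C (x ^ i) * X)
  set Θ := ∏ i ∈ range (m + 1), (1 + C (x ^ i) * X)
  have hfac : A4 = A2 * A1 * Θ := by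
    simp only [A4, A2, A1, Θ, ← prod_mul_distrib]
    refine prod_congr rfl fun i _ => ?_
    simp only [← pow_mul, map_pow, map_neg, map_one]
    ring
  set E4 := expand 4 four_ne_zero (qbinomSeries (x ^ 4) m)
  set E2 := expand 2 two_ne_zero (rescale (-1) (qbinomSeries (x ^ 2) m))
  set G1 := qbinomSeries x m
  -- `E4 Θ = E4 Θ (A2 E2) (A1 G1) = (A4 E4) E2 G1 = E2 G1`
  linear_combination (-E4 * Θ * A1 * G1) * h2 - E4 * Θ * h1 - E2 * G1 * E4 * hfac + E2 * G1 * h4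

theorem q_sun_identity_new4 (m n : ℕ) :
    ∑ k ∈ range (n / 4 + 1),
      qbinom (RatFunc.X ^ 4) (m + k) k * qbinom RatFunc.X (m + 1) (n - 4 * k) *
        RatFunc.X ^ ((n - 4 * k).choose 2) =
    ∑ k ∈ range (n / 2 + 1),
      (-1) ^ k * qbinom (RatFunc.X ^ 2) (m + k) k * qbinom RatFunc.X (m + n - 2 * k) (n - 2 * k) := by
  have h := congrArg (coeff n) (expand_qbinomSeries_mul_eq m)
  rw [coeff_expand_mul_eq_sum_range, coeff_expand_mul_eq_sum_range] at h
  simp only [qbinomSeries, coeff_rescale, coeff_mk, ← mul_assoc] at h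
  rw [h]
  refine sum_congr rfl fun k hk => ?_
  rw [Nat.add_sub_assoc (by have := mem_range.1 hk; omega)]
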